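/- If A ≤⁻ B in the minus order, then every bounded inner inverse of B is an inner inverse of A: for any bounded operator B⁻ with B B⁻ B = B, one has A B⁻ A = A. -/

import Mathlib

open ContinuousLinearMap

theorem ContinuousLinearMap.comp_comp_eq_self_of_eq_idempotent_comp
    {R M N : Type*} [Semiring R] [TopologicalSpace M] [AddCommMonoid M] [Module R M]
    [TopologicalSpace N] [AddCommMonoid N] [Module R N]
    {A B : M →L[R] N} {P : N →L[R] N} {Q : M →L[R] M} (Bm : N →L[R] M)
    (hP : P ∘L P = P) (hAP : A = P ∘L B) (hAQ : A = B ∘L Q) (hBm : B ∘L (Bm ∘L B) = B) :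
    A ∘L (Bm ∘L A) = A :=
  calc A ∘L (Bm ∘L A) = P ∘L (B ∘L (Bm ∘L B)) ∘L Q := by
          nth_rewrite 1 [hAP]; nth_rewrite 1 [hAQ]; simp only [comp_assoc]
    _ = P ∘L A := by rw [hBm, ← hAQ]
    _ = A := by rw [hAP, ← comp_assoc, hP]

theorem stmt7 {H K : Type*} [NormedAddCommGroup H] [InnerProductSpace ℂ H]
    [NormedAddCommGroup K] [InnerProductSpace ℂ K]
    (A B : H →L[ℂ] K)
    (h : ∃ (Qt : K →L[ℂ] K) (Q : H →L[ℂ] H),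
      Qt ∘L Qt = Qt ∧ Q ∘L Q = Q ∧ A = Qt ∘L B ∧ A = B ∘L Q) :
    ∀ Bm : K →L[ℂ] H, B ∘L (Bm ∘L B) = B → A ∘L (Bm ∘L A) = A := by
  obtain ⟨Qt, Q, hQt, -, hAQt, hAQ⟩ := h
  exact fun Bm hBm => comp_comp_eq_self_of_eq_idempotent_comp Bm hQt hAQt hAQ hBm
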